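/- arXiv:2411.12606 — 3 statements merged into one kernel-verified Lean document; each statement's English description precedes it below -/
import Mathlib

section
/- If G is a cycle permutation graph that contains a cycle of length 4, then G is hamiltonian. -/
open SimpleGraph

/-- A cubic graph: every vertex has exactly 3 neighbours. -/
def IsCubic {V : Type*} (G : SimpleGraph V) : Prop :=
  ∀ v, (G.neighborSet v).ncard = 3

/-- The set `S` carries a chordless (induced) cycle of `G`. -/
def IsChordlessCycleOn {V : Type*} (G : SimpleGraph V) (S : Set V) : Prop :=
  (G.induce S).Connected ∧ ∀ v ∈ S, (G.neighborSet v ∩ S).ncard = 2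

/-- A cycle permutation graph: a cubic graph with a 2-factor consisting of two chordless
cycles. -/
def IsCyclePermutationGraph {V : Type*} (G : SimpleGraph V) : Prop :=
  IsCubic G ∧ ∃ S : Set V, IsChordlessCycleOn G S ∧ IsChordlessCycleOn G Sᶜ

/-!
Every vertex has exactly one neighbour on the other cycle. Hence a 4-cycle either meets both
cycles, and then it consists of an edge `ab` of one cycle, an edge `cd` of the other and the
matching edges `ac`, `bd`; or it lies on one cycle, which is then this 4-cycle, and among the
matching partners `y₀ y₁ y₂ y₃` of its vertices `y₁` is adjacent to `y₀` or `y₂` (the other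
cycle has no further vertices), which gives such a configuration again. From it, the
hamiltonian cycle runs from `a` the long way around the first cycle to `b`, crosses to `d`,
runs the long way around the second cycle to `c` and returns to `a`.
-/

namespace SimpleGraph

variable {V : Type*} {K : SimpleGraph V}

theorem IsCycles.mem_support_of_reachable [Finite V] (hcyc : K.IsCycles) {u v : V}
    {c : K.Walk u u} (hc : c.IsCycle) (huv : K.Reachable u v) : v ∈ c.support := by
  have : K.LocallyFinite := fun _ => Fintype.ofFinite _
  obtain ⟨C, hC⟩ := c.toSubgraph_connected.exists_verts_eq_connectedComponentSupp
    fun x hx w hxw => (hc.adj_toSubgraph_iff_of_isCycles hcyc hx w).mpr hxw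
  have hu : u ∈ C.supp := hC ▸ c.mem_verts_toSubgraph.mpr c.start_mem_support
  rw [← c.mem_verts_toSubgraph, hC, ConnectedComponent.mem_supp_iff] at *
  rw [← hu, ConnectedComponent.eq]
  exact huv.symm

theorem IsCycles.exists_isPath_of_adj [Finite V] (hcyc : K.IsCycles) {a b : V}
    (hab : K.Adj a b) :
    ∃ p : K.Walk a b, p.IsPath ∧ ∀ v, K.Reachable a v → v ∈ p.support := by
  classical
  -- a path from `b` to `a` avoiding `ab` closes up to a cycle, which covers the component
  obtain ⟨q⟩ := (hcyc.reachable_deleteEdges hab).symm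
  set q' := q.toPath.val.mapLe (K.deleteEdges_le {s(a, b)})
  have hcycle : (Walk.cons hab q').IsCycle := by
    refine (Walk.cons_isCycle_iff _ _).mpr ⟨q.toPath.2.mapLe _, fun h => ?_⟩
    rw [Walk.edges_mapLe_eq_edges] at h
    simpa using q.toPath.val.edges_subset_edgeSet h
  refine ⟨q'.reverse, q.toPath.2.mapLe _ |>.reverse, fun v hv => ?_⟩
  have := hcyc.mem_support_of_reachable hcycle hv
  rw [Walk.support_cons, List.mem_cons] at this
  rw [Walk.support_reverse, List.mem_reverse]
  exact this.elim (fun h => h ▸ q'.end_mem_support) id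

theorem spanningCoe_induce_adj {s : Set V} {G : SimpleGraph V} {u v : V} :
    (G.induce s).spanningCoe.Adj u v ↔ G.Adj u v ∧ u ∈ s ∧ v ∈ s := by
  simp

end SimpleGraph

section

variable {V : Type*} {G : SimpleGraph V} {S : Set V}

namespace IsChordlessCycleOn

theorem isCycles (hS : IsChordlessCycleOn G S) : (G.induce S).spanningCoe.IsCycles := by
  rintro v ⟨w, hvw⟩
  have hv : v ∈ S := (spanningCoe_induce_adj.mp hvw).2.1
  convert hS.2 v hv using 2
  ext w
  simp [hv]

theorem reachable (hS : IsChordlessCycleOn G S) {u v : V} (hu : u ∈ S) (hv : v ∈ S) :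
    (G.induce S).spanningCoe.Reachable u v :=
  (hS.1.preconnected ⟨u, hu⟩ ⟨v, hv⟩).map (Embedding.map _ _).toHom

theorem exists_isPath [Finite V] (hS : IsChordlessCycleOn G S) {a b : V} (ha : a ∈ S)
    (hb : b ∈ S) (hab : G.Adj a b) :
    ∃ p : G.Walk a b, p.IsPath ∧ ∀ v, v ∈ p.support ↔ v ∈ S := by
  obtain ⟨p, hp, hcover⟩ :=
    hS.isCycles.exists_isPath_of_adj (spanningCoe_induce_adj.mpr ⟨hab, ha, hb⟩)
  refine ⟨p.mapLe (G.spanningCoe_induce_le S), hp.mapLe _, fun v => ?_⟩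
  rw [Walk.support_mapLe_eq_support]
  refine ⟨fun hv => ?_, fun hv => hcover v (hS.reachable ha hv)⟩
  obtain ⟨w, hvw⟩ := mem_support_of_mem_walk_support p (Walk.not_nil_of_ne hab.ne) hv
  exact (spanningCoe_induce_adj.mp hvw).2.1

end IsChordlessCycleOn

theorem IsCubic.existsUnique_adj_notMem (hG : IsCubic G)
    (hS : ∀ v ∈ S, (G.neighborSet v ∩ S).ncard = 2) {v : V} (hv : v ∈ S) :
    ∃! w, G.Adj v w ∧ w ∉ S := by
  have h := Set.ncard_inter_add_ncard_sdiff_eq_ncard (G.neighborSet v) S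
    (Set.finite_of_ncard_ne_zero (by simp [hG v]))
  rw [hS v hv, hG v] at h
  obtain ⟨w, hw⟩ := Set.ncard_eq_one.mp (show (G.neighborSet v \ S).ncard = 1 by omega)
  exact ⟨w, hw.symm.subset rfl, fun u hu => (hw ▸ hu : u ∈ ({w} : Set V))⟩

/-- The 4-cycle `a b d c`, with the edge `ab` inside `S` and the edge `cd` outside. -/
def IsCrossingSquare (G : SimpleGraph V) (S : Set V) (a b c d : V) : Prop :=
  a ∈ S ∧ b ∈ S ∧ c ∉ S ∧ d ∉ S ∧ G.Adj a b ∧ G.Adj c d ∧ G.Adj a c ∧ G.Adj b d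

theorem IsCrossingSquare.of_compl {a b c d : V} (h : IsCrossingSquare G Sᶜ a b c d) :
    IsCrossingSquare G S c d a b := by
  obtain ⟨ha, hb, hc, hd, hab, hcd, hac, hbd⟩ := h
  exact ⟨not_not.mp hc, not_not.mp hd, ha, hb, hcd, hab, hac.symm, hbd.symm⟩

theorem IsCrossingSquare.isHamiltonian [Fintype V] [DecidableEq V] {a b c d : V}
    (h : IsCrossingSquare G S a b c d) (hS : IsChordlessCycleOn G S)
    (hSc : IsChordlessCycleOn G Sᶜ) : G.IsHamiltonian := by
  obtain ⟨ha, hb, hc, hd, hab, hcd, hac, hbd⟩ := h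
  obtain ⟨p, hp, hpS⟩ := hS.exists_isPath ha hb hab
  obtain ⟨q, hq, hqS⟩ := hSc.exists_isPath hd hc hcd.symm
  set P := p.append (Walk.cons hbd q)
  have hsupp : P.support = p.support ++ q.support := by simp [P, Walk.support_append]
  have hP : P.IsPath := by
    rw [Walk.isPath_def, hsupp]
    exact List.nodup_append.mpr ⟨hp.support_nodup, hq.support_nodup,
      fun x hx y hy hxy => (hqS y).mp hy (hxy ▸ (hpS x).mp hx)⟩
  have hca : s(a, c) ∉ P.edges := fun h => by
    have h1 := hP.length_eq_one_of_mem_edges h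
    have h2 : p.length ≠ 0 := fun h0 => hab.ne (p.eq_of_length_eq_zero h0)
    rw [Walk.length_append, Walk.length_cons] at h1
    omega
  refine fun _ => ⟨c, Walk.cons hac.symm P, ?_⟩
  rw [Walk.isHamiltonianCycle_iff_isCycle_and_support_count_tail_eq_one]
  refine ⟨(Walk.cons_isCycle_iff _ _).mpr ⟨hP, ?_⟩, fun v => ?_⟩
  · rwa [Sym2.eq_swap]
  · rw [Walk.support_cons, List.tail_cons]
    refine List.count_eq_one_of_mem hP.support_nodup ?_
    rw [hsupp, List.mem_append, hpS, hqS]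
    exact em _

/-- Adjacent vertices differ, so the four vertices are distinct. -/
def IsFourCycle (G : SimpleGraph V) (x₀ x₁ x₂ x₃ : V) : Prop :=
  G.Adj x₀ x₁ ∧ G.Adj x₁ x₂ ∧ G.Adj x₂ x₃ ∧ G.Adj x₃ x₀ ∧ x₀ ≠ x₂ ∧ x₁ ≠ x₃

theorem SimpleGraph.Walk.IsCycle.exists_isFourCycle {u : V} {c : G.Walk u u} (hc : c.IsCycle)
    (h4 : c.length = 4) : ∃ x₀ x₁ x₂ x₃, IsFourCycle G x₀ x₁ x₂ x₃ := by
  rcases c with _ | ⟨h₀₁, _ | ⟨h₁₂, _ | ⟨h₂₃, _ | ⟨h₃₀, _ | ⟨_, _⟩⟩⟩⟩⟩ <;>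
    simp only [Walk.length_cons, Walk.length_nil] at h4 <;> try omega
  have hnodup := hc.support_nodup
  simp only [Walk.support_cons, Walk.support_nil, List.tail_cons, List.nodup_cons, List.mem_cons,
    List.not_mem_nil] at hnodup
  exact ⟨_, _, _, _, h₀₁, h₁₂, h₂₃, h₃₀, by tauto, by tauto⟩

namespace IsFourCycle

variable {x₀ x₁ x₂ x₃ : V}

theorem rotate (h : IsFourCycle G x₀ x₁ x₂ x₃) : IsFourCycle G x₁ x₂ x₃ x₀ :=
  let ⟨h₀₁, h₁₂, h₂₃, h₃₀, h₀₂, h₁₃⟩ := h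
  ⟨h₁₂, h₂₃, h₃₀, h₀₁, h₁₃, h₀₂.symm⟩

theorem isCrossingSquare (h : IsFourCycle G x₀ x₁ x₂ x₃) (hG : IsCubic G)
    (hS : IsChordlessCycleOn G S) (hSc : IsChordlessCycleOn G Sᶜ) (hx₀ : x₀ ∈ S)
    (hx₁ : x₁ ∉ S) : IsCrossingSquare G S x₀ x₃ x₁ x₂ := by
  obtain ⟨h₀₁, h₁₂, h₂₃, h₃₀, h₀₂, h₁₃⟩ := h
  have hx₃ : x₃ ∈ S := by
    by_contra hx₃
    exact h₁₃ ((hG.existsUnique_adj_notMem hS.2 hx₀).unique ⟨h₀₁, hx₁⟩ ⟨h₃₀.symm, hx₃⟩)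
  have hx₂ : x₂ ∉ S := fun hx₂ => h₀₂ ((hG.existsUnique_adj_notMem hSc.2 hx₁).unique
    ⟨h₀₁.symm, not_not.mpr hx₀⟩ ⟨h₁₂, not_not.mpr hx₂⟩)
  exact ⟨hx₀, hx₃, hx₁, hx₂, h₃₀.symm, h₁₂, h₀₁, h₂₃.symm⟩

theorem subset_of_isChordlessCycleOn [Finite V] (h : IsFourCycle G x₀ x₁ x₂ x₃)
    (hS : IsChordlessCycleOn G S) (hx₀ : x₀ ∈ S) (hx₁ : x₁ ∈ S) (hx₂ : x₂ ∈ S)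
    (hx₃ : x₃ ∈ S) : S ⊆ {x₀, x₁, x₂, x₃} := by
  obtain ⟨h₀₁, h₁₂, h₂₃, h₃₀, h₀₂, h₁₃⟩ := h
  have hadj {u v : V} (huv : G.Adj u v) (hu : u ∈ S) (hv : v ∈ S) :
      (G.induce S).spanningCoe.Adj u v :=
    spanningCoe_induce_adj.mpr ⟨huv, hu, hv⟩
  let c := Walk.cons (hadj h₀₁ hx₀ hx₁) <| .cons (hadj h₁₂ hx₁ hx₂) <|
    .cons (hadj h₂₃ hx₂ hx₃) <| .cons (hadj h₃₀ hx₃ hx₀) .nil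
  have hc : c.IsCycle := by
    simp [c, Walk.cons_isCycle_iff, h₀₁.ne, h₀₁.ne', h₁₂.ne, h₂₃.ne, h₃₀.ne, h₀₂, h₁₃, h₀₂.symm]
  intro t ht
  have := hS.isCycles.mem_support_of_reachable hc (hS.reachable hx₀ ht)
  simp only [c, Walk.support_cons, Walk.support_nil, List.mem_cons] at this
  tauto

theorem exists_isCrossingSquare_of_mem [Finite V] (h : IsFourCycle G x₀ x₁ x₂ x₃)
    (hG : IsCubic G) (hS : IsChordlessCycleOn G S)
    (hSc : ∀ v ∈ Sᶜ, (G.neighborSet v ∩ Sᶜ).ncard = 2) (hx₀ : x₀ ∈ S) (hx₁ : x₁ ∈ S)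
    (hx₂ : x₂ ∈ S) (hx₃ : x₃ ∈ S) : ∃ a b c d, IsCrossingSquare G S a b c d := by
  have hcover := h.subset_of_isChordlessCycleOn hS hx₀ hx₁ hx₂ hx₃
  obtain ⟨h₀₁, h₁₂, -, -, -, -⟩ := h
  have cross {x : V} (hx : x ∈ S) := hG.existsUnique_adj_notMem hS.2 hx
  obtain ⟨y₀, hy₀, -⟩ := cross hx₀
  obtain ⟨y₁, hy₁, -⟩ := cross hx₁
  obtain ⟨y₂, hy₂, -⟩ := cross hx₂
  obtain ⟨y₃, hy₃, -⟩ := cross hx₃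
  by_cases hy₁₀ : G.Adj y₁ y₀
  · exact ⟨x₁, x₀, y₁, y₀, hx₁, hx₀, hy₁.2, hy₀.2, h₀₁.symm, hy₁₀, hy₁.1, hy₀.1⟩
  by_cases hy₁₂ : G.Adj y₁ y₂
  · exact ⟨x₁, x₂, y₁, y₂, hx₁, hx₂, hy₁.2, hy₂.2, h₁₂, hy₁₂, hy₁.1, hy₂.1⟩
  have hsub : G.neighborSet y₁ ∩ Sᶜ ⊆ {y₃} := by
    rintro z ⟨hz, hzS⟩
    obtain ⟨t, ⟨hzt, htS⟩, -⟩ := hG.existsUnique_adj_notMem hSc hzS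
    have hz_eq {x y : V} (hx : x ∈ S) (hy : G.Adj x y ∧ y ∉ S) (hxt : x = t) : z = y :=
      (cross hx).unique ⟨hxt ▸ hzt.symm, hzS⟩ hy
    rcases hcover (not_not.mp htS) with rfl | rfl | rfl | rfl
    · exact absurd (hz_eq hx₀ hy₀ rfl ▸ hz) hy₁₀
    · exact absurd (hz_eq hx₁ hy₁ rfl ▸ hz) (G.loopless.irrefl _)
    · exact absurd (hz_eq hx₂ hy₂ rfl ▸ hz) hy₁₂
    · exact hz_eq hx₃ hy₃ rfl
  have := Set.ncard_le_ncard hsub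
  rw [hSc y₁ hy₁.2, Set.ncard_singleton] at this
  omega

theorem exists_isCrossingSquare [Finite V] (h : IsFourCycle G x₀ x₁ x₂ x₃) (hG : IsCubic G)
    (hS : IsChordlessCycleOn G S) (hSc : IsChordlessCycleOn G Sᶜ) :
    ∃ a b c d, IsCrossingSquare G S a b c d := by
  by_cases h₀ : x₀ ∈ S ∧ x₁ ∉ S
  · exact ⟨_, _, _, _, h.isCrossingSquare hG hS hSc h₀.1 h₀.2⟩
  by_cases h₁ : x₁ ∈ S ∧ x₂ ∉ S
  · exact ⟨_, _, _, _, h.rotate.isCrossingSquare hG hS hSc h₁.1 h₁.2⟩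
  by_cases h₂ : x₂ ∈ S ∧ x₃ ∉ S
  · exact ⟨_, _, _, _, h.rotate.rotate.isCrossingSquare hG hS hSc h₂.1 h₂.2⟩
  by_cases h₃ : x₃ ∈ S ∧ x₀ ∉ S
  · exact ⟨_, _, _, _, h.rotate.rotate.rotate.isCrossingSquare hG hS hSc h₃.1 h₃.2⟩
  -- no vertex of `S` is followed by one outside `S`, so the 4-cycle lies on one side
  by_cases hx₀ : x₀ ∈ S
  · exact h.exists_isCrossingSquare_of_mem hG hS hSc.2 hx₀ (by tauto) (by tauto) (by tauto)
  · obtain ⟨a, b, c, d, hsq⟩ := h.exists_isCrossingSquare_of_mem hG hSc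
      (by simpa only [compl_compl] using hS.2) hx₀ (by tauto) (by tauto) (by tauto)
    exact ⟨c, d, a, b, hsq.of_compl⟩

end IsFourCycle

end

/-- A cycle permutation graph containing a cycle of length 4 is hamiltonian. -/
theorem statement_4 {V : Type*} [Fintype V] [DecidableEq V] (G : SimpleGraph V)
    (hG : IsCyclePermutationGraph G)
    (h4 : ∃ (v : V) (c : G.Walk v v), c.IsCycle ∧ c.length = 4) :
    G.IsHamiltonian := by
  obtain ⟨hcub, S, hS, hSc⟩ := hG
  obtain ⟨v, c, hc, hlen⟩ := h4
  obtain ⟨x₀, x₁, x₂, x₃, hsq⟩ := hc.exists_isFourCycle hlen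
  obtain ⟨a, b, c, d, hcross⟩ := hsq.exists_isCrossingSquare hcub hS hSc
  exact hcross.isHamiltonian hS hSc
end

section
/- The Petersen graph is not hamiltonian. -/
open SimpleGraph

/-- The Petersen graph, as the Kneser graph `K(5,2)`: vertices are the 2-element subsets of a
5-element set, adjacent iff disjoint. -/
def petersen : SimpleGraph {s : Finset (Fin 5) // s.card = 2} where
  Adj a b := Disjoint (a : Finset (Fin 5)) (b : Finset (Fin 5))
  symm := ⟨fun a b h => h.symm⟩
  loopless := by
    constructor
    intro a h
    have he : (a : Finset (Fin 5)) = ⊥ := disjoint_self.mp h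
    have h2 := a.2
    rw [he] at h2
    simp at h2

/-!
The Petersen graph is strongly regular with parameters (10, 3, 0, 1): it is cubic, triangle-free,
and two distinct vertices have at most one common neighbour, so it has no 4-cycles either.
Label a Hamiltonian cycle `v₀, …, v₉` by `ZMod 10`. The third neighbour of `vᵢ` is some `vᵢ₊ⱼ`,
and the absence of 3- and 4-cycles forces `j ∈ {4, 5, 6}`. A chord `v₀ v₄` is impossible: the
chord at `v₅` would end at `v₉`, `v₀` or `v₁`, closing a 4-cycle or giving `v₀` a fourth
neighbour. Read backwards, a chord of length 6 is one of length 4, so every chord is a diameter;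
but then `v₀ v₁ v₆ v₅` is a 4-cycle.
-/

namespace SimpleGraph

variable {V : Type*} {G : SimpleGraph V}

section StronglyRegular

variable [Fintype V] [DecidableRel G.Adj] {n k μ : ℕ} {u v w : V}

theorem IsSRGWith.commonNeighbors_eq_empty (h : G.IsSRGWith n k 0 μ) (huv : G.Adj u v) :
    G.commonNeighbors u v = ∅ :=
  Set.isEmpty_coe_sort.mp (Fintype.card_eq_zero_iff.mp (h.of_adj u v huv))

theorem IsSRGWith.not_adj_of_adj_of_adj (h : G.IsSRGWith n k 0 μ) (huv : G.Adj u v)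
    (hvw : G.Adj v w) : ¬G.Adj u w := fun huw =>
  (h.commonNeighbors_eq_empty huw).subset (⟨huv, hvw.symm⟩ : v ∈ G.commonNeighbors u w)

theorem IsSRGWith.commonNeighbors_subsingleton (h : G.IsSRGWith n k 0 1) (huv : u ≠ v) :
    (G.commonNeighbors u v).Subsingleton := by
  by_cases hadj : G.Adj u v
  · rw [h.commonNeighbors_eq_empty hadj]
    exact Set.subsingleton_empty
  · exact Set.subsingleton_coe _ |>.mp
      (Fintype.card_le_one_iff_subsingleton.mp (h.of_not_adj huv hadj).le)

end StronglyRegular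

structure IsHamiltonianEnumeration (G : SimpleGraph V) {n : ℕ} (f : ZMod n → V) : Prop where
  bijective : Function.Bijective f
  adj_add_one : ∀ i, G.Adj (f i) (f (i + 1))

theorem IsHamiltonianEnumeration.comp_add_left {n : ℕ} {f : ZMod n → V}
    (hf : G.IsHamiltonianEnumeration f) (i : ZMod n) :
    G.IsHamiltonianEnumeration (fun j => f (i + j)) where
  bijective := hf.bijective.comp (Equiv.addLeft i).bijective
  adj_add_one j := by simpa only [add_assoc] using hf.adj_add_one (i + j)

theorem IsHamiltonian.exists_isHamiltonianEnumeration [Fintype V] [DecidableEq V] {n : ℕ}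
    [NeZero n] (hG : G.IsHamiltonian) (hn : Fintype.card V = n) (hn1 : n ≠ 1) :
    ∃ f : ZMod n → V, G.IsHamiltonianEnumeration f := by
  obtain ⟨a, p, hp⟩ := hG (hn ▸ hn1)
  have hlen : p.length = n := hp.length_eq.trans hn
  have hperiodic : ∀ m ≤ n, p.getVert (m % n) = p.getVert m := by
    intro m hm
    rcases hm.lt_or_eq with hm | rfl
    · rw [Nat.mod_eq_of_lt hm]
    · rw [Nat.mod_self, Walk.getVert_zero, ← hlen, Walk.getVert_length]
  refine ⟨fun i => p.getVert i.val, ?_, fun i => ?_⟩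
  · rw [Fintype.bijective_iff_injective_and_card, ZMod.card, hn]
    have hval (i : ZMod n) : i.val ≤ p.length - 1 := by have := ZMod.val_lt i; omega
    exact ⟨fun i j hij => ZMod.val_injective n (hp.isCycle.getVert_injOn' (hval i) (hval j) hij),
      rfl⟩
  · have := p.adj_getVert_succ (i := i.val) (hlen ▸ ZMod.val_lt i)
    rwa [ZMod.val_add, ZMod.val_one_eq_one_mod, Nat.add_mod_mod, hperiodic _ (ZMod.val_lt i)]

section Decagon

open Finset

variable [Fintype V] [DecidableRel G.Adj] [DecidableEq V] {n : ℕ} {f : ZMod 10 → V}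

-- Indices below are closed terms of `ZMod 10`, so e.g. `hf.adj_add_one 9` is accepted as
-- `G.Adj (f 9) (f 0)` by unfolding; `comp_add_left` rotates any position to index `0`.

theorem IsSRGWith.exists_adj_four_five_six (h : G.IsSRGWith n 3 0 1)
    (hf : G.IsHamiltonianEnumeration f) :
    ∃ j ∈ ({4, 5, 6} : Finset (ZMod 10)), G.Adj (f 0) (f j) := by
  have hlt : #{f 9, f 1} < #(G.neighborFinset (f 0)) := by
    rw [card_neighborFinset_eq_degree, h.regular.degree_eq]
    exact card_le_two.trans_lt (by norm_num)
  obtain ⟨w, hadj, hne⟩ := exists_mem_notMem_of_card_lt_card hlt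
  obtain ⟨j, rfl⟩ := hf.bijective.surjective w
  rw [mem_neighborFinset] at hadj
  rw [mem_insert, mem_singleton, not_or] at hne
  have hinj := hf.bijective.injective
  have hcases : ∀ j : ZMod 10, j ∈ ({4, 5, 6} : Finset (ZMod 10)) ∨
      j = 0 ∨ j = 1 ∨ j = 2 ∨ j = 3 ∨ j = 7 ∨ j = 8 ∨ j = 9 := by decide
  rcases hcases j with hj | rfl | rfl | rfl | rfl | rfl | rfl | rfl
  · exact ⟨j, hj, hadj⟩
  all_goals exfalso
  · exact G.irrefl hadj
  · exact hne.2 rfl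
  · exact h.not_adj_of_adj_of_adj (hf.adj_add_one 0) (hf.adj_add_one 1) hadj
  · exact hinj.ne (by decide) <| h.commonNeighbors_subsingleton (hinj.ne (by decide))
      ⟨hf.adj_add_one 0, (hf.adj_add_one 1).symm⟩ ⟨hadj, hf.adj_add_one 2⟩
  · exact hinj.ne (by decide) <| h.commonNeighbors_subsingleton (hinj.ne (by decide))
      ⟨hadj, (hf.adj_add_one 7).symm⟩ ⟨(hf.adj_add_one 9).symm, hf.adj_add_one 8⟩
  · exact h.not_adj_of_adj_of_adj (hf.adj_add_one 8) (hf.adj_add_one 9) hadj.symm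
  · exact hne.1 rfl

theorem IsSRGWith.not_adj_zero_four (h : G.IsSRGWith n 3 0 1)
    (hf : G.IsHamiltonianEnumeration f) : ¬G.Adj (f 0) (f 4) := by
  intro h04
  have hinj := hf.bijective.injective
  obtain ⟨j, hj, h5j⟩ := h.exists_adj_four_five_six (hf.comp_add_left 5)
  simp only [mem_insert, mem_singleton] at hj
  rcases hj with rfl | rfl | rfl
  · exact hinj.ne (by decide) <| h.commonNeighbors_subsingleton (hinj.ne (by decide))
      ⟨hf.adj_add_one 4, h5j.symm⟩ ⟨h04.symm, hf.adj_add_one 9⟩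
  · have hsub : ({9, 1, 4, 5} : Finset (ZMod 10)).image f ⊆ G.neighborFinset (f 0) := by
      intro v hv
      simp only [mem_image, mem_insert, mem_singleton] at hv
      obtain ⟨j, hj, rfl⟩ := hv
      rw [mem_neighborFinset]
      rcases hj with rfl | rfl | rfl | rfl
      exacts [(hf.adj_add_one 9).symm, hf.adj_add_one 0, h04, h5j.symm]
    have := card_le_card hsub
    rw [card_image_of_injective _ hinj, card_neighborFinset_eq_degree,
      h.regular.degree_eq] at this
    exact absurd this (by decide)
  · exact hinj.ne (by decide) <| h.commonNeighbors_subsingleton (hinj.ne (by decide))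
      ⟨(hf.adj_add_one 0).symm, h04.symm⟩ ⟨h5j.symm, hf.adj_add_one 4⟩

theorem IsSRGWith.adj_zero_five (h : G.IsSRGWith n 3 0 1)
    (hf : G.IsHamiltonianEnumeration f) : G.Adj (f 0) (f 5) := by
  obtain ⟨j, hj, hadj⟩ := h.exists_adj_four_five_six hf
  simp only [mem_insert, mem_singleton] at hj
  rcases hj with rfl | rfl | rfl
  · exact absurd hadj (h.not_adj_zero_four hf)
  · exact hadj
  · exact absurd hadj.symm (h.not_adj_zero_four (hf.comp_add_left 6))

end Decagon

theorem IsSRGWith.not_isHamiltonian [Fintype V] [DecidableRel G.Adj] [DecidableEq V]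
    (h : G.IsSRGWith 10 3 0 1) : ¬G.IsHamiltonian := by
  intro hG
  obtain ⟨f, hf⟩ := hG.exists_isHamiltonianEnumeration h.card (by norm_num)
  have hinj := hf.bijective.injective
  exact hinj.ne (by decide) <| h.commonNeighbors_subsingleton (hinj.ne (by decide))
    ⟨hf.adj_add_one 0, (h.adj_zero_five (hf.comp_add_left 1)).symm⟩
    ⟨h.adj_zero_five hf, (hf.adj_add_one 5).symm⟩

end SimpleGraph

instance : DecidableRel petersen.Adj := fun a b => inferInstanceAs (Decidable (Disjoint a.1 b.1))

theorem petersen_isSRGWith : petersen.IsSRGWith 10 3 0 1 where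
  card := by decide
  regular v := by revert v; decide
  of_adj := by decide
  of_not_adj := by unfold Pairwise; decide

/-- The Petersen graph is not hamiltonian. -/
theorem statement_14 : ¬ petersen.IsHamiltonian :=
  petersen_isSRGWith.not_isHamiltonian
end

section
/- Let π be a permutation of Z_k with π(k-1) = k-1 and k ≥ 4. Then G(π) is non-hamiltonian if and only if the restricted permutation π̄ of Z_{k-1} (defined by π̄(i) = π(i) for i < k-1) is bad. -/
open SimpleGraph

/-- The cycle permutation graph `G(π)`: two cycles `x_0 … x_{k-1}` (the `inl` vertices) and
`y_0 … y_{k-1}` (the `inr` vertices), with matching edges `x_i y_{π(i)}`. -/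
def GPfull (k : ℕ) (π : Equiv.Perm (Fin k)) : SimpleGraph (Fin k ⊕ Fin k) :=
  SimpleGraph.fromRel (fun a b =>
    match a, b with
    | .inl i, .inl j => (j : ℕ) = (i : ℕ) + 1 ∨ ((i : ℕ) = k - 1 ∧ (j : ℕ) = 0)
    | .inr i, .inr j => (j : ℕ) = (i : ℕ) + 1 ∨ ((i : ℕ) = k - 1 ∧ (j : ℕ) = 0)
    | .inl i, .inr j => j = π i
    | _, _ => False)

/-- The graph `G'(π)`: as `G(π)` but with the edges `x_{k-1} x_0` and `y_{k-1} y_0` removed. -/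
def GP' (k : ℕ) (π : Equiv.Perm (Fin k)) : SimpleGraph (Fin k ⊕ Fin k) :=
  SimpleGraph.fromRel (fun a b =>
    match a, b with
    | .inl i, .inl j => (j : ℕ) = (i : ℕ) + 1
    | .inr i, .inr j => (j : ℕ) = (i : ℕ) + 1
    | .inl i, .inr j => j = π i
    | _, _ => False)

/-- `π` is good (Klee): `G'(π)` has a hamiltonian path with endpoints `x_i`, `y_j` for
`i, j ∈ {0, k-1}`, or a hamiltonian `E`-pair in which one path has endpoints `x_i`, `y_j`
(`i, j ∈ {0, k-1}`) and the other has endpoints `x_{k-1-i}`, `y_{k-1-j}`. -/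
def IsGood {k : ℕ} (π : Equiv.Perm (Fin k)) : Prop :=
  (∃ i j : Fin k, ((i : ℕ) = 0 ∨ (i : ℕ) = k - 1) ∧ ((j : ℕ) = 0 ∨ (j : ℕ) = k - 1) ∧
    ∃ p : (GP' k π).Walk (Sum.inl i) (Sum.inr j), p.IsPath ∧ ∀ w, w ∈ p.support) ∨
  (∃ i j : Fin k, ((i : ℕ) = 0 ∨ (i : ℕ) = k - 1) ∧ ((j : ℕ) = 0 ∨ (j : ℕ) = k - 1) ∧
    ∃ (p : (GP' k π).Walk (Sum.inl i) (Sum.inr j))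
      (q : (GP' k π).Walk (Sum.inl i.rev) (Sum.inr j.rev)),
      p.IsPath ∧ q.IsPath ∧ (∀ w, w ∈ p.support ∨ w ∈ q.support) ∧
      ∀ w, ¬(w ∈ p.support ∧ w ∈ q.support))

/-- `π` is bad if it is not good. -/
def IsBad {k : ℕ} (π : Equiv.Perm (Fin k)) : Prop := ¬ IsGood π

/-!
Write `v = x_{k-1}` and `w = y_{k-1}`. Since `π` fixes `k-1`, `v` and `w` are adjacent,
`N(v) = {x_0, x_{k-2}, w}`, `N(w) = {y_0, y_{k-2}, v}`, and deleting `v` and `w` from `G(π)`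
leaves a copy of `G'(π̄)`. A hamiltonian cycle of `G(π)` is a hamiltonian path of `G(π) - v`
joining two distinct neighbours of `v`. If `w` is an end of that path, dropping it leaves a
hamiltonian path `x_i … y_j` of `G'(π̄)`. Otherwise the path runs `x_i … w … x_{k-2-i}`, and `w`
cuts it into two paths `x_i … y_j` and `y_{k-2-j} … x_{k-2-i}` covering `G'(π̄)`. Both
constructions reverse.
-/

namespace SimpleGraph

variable {V W : Type*} {G : SimpleGraph V}

namespace Walk

lemma exists_map_eq_of_forall_mem_range {H : SimpleGraph W} (f : H ↪g G) {a b : W}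
    (p : G.Walk (f a) (f b)) (hp : ∀ z ∈ p.support, z ∈ Set.range f) :
    ∃ q : H.Walk a b, q.map f.toHom = p := by
  suffices ∀ {x y} (p : G.Walk x y), (∀ z ∈ p.support, z ∈ Set.range f) →
      ∀ a b (hx : f a = x) (hy : f b = y),
        ∃ q : H.Walk a b, q.map f.toHom = p.copy hx.symm hy.symm
    from this p hp a b rfl rfl
  intro x y p
  induction p with
  | nil =>
    rintro - a b rfl hb
    cases f.injective hb
    exact ⟨nil, rfl⟩
  | cons h p ih =>
    rintro hp a b rfl rfl
    obtain ⟨c, rfl⟩ := hp _ (List.mem_cons_of_mem _ p.start_mem_support)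
    obtain ⟨q, hq⟩ := ih (fun z hz => hp z (List.mem_cons_of_mem _ hz)) c b rfl rfl
    exact ⟨cons (f.map_adj_iff.1 h) q, by simpa using hq⟩

lemma exists_support_eq_append_cons {a b w : V} (p : G.Walk a b) (hw : w ∈ p.support)
    (hwa : w ≠ a) (hwb : w ≠ b) :
    ∃ d₁ d₂, ∃ (R : G.Walk a d₁) (S : G.Walk d₂ b),
      G.Adj d₁ w ∧ G.Adj w d₂ ∧ p.support = R.support ++ w :: S.support := by
  classical
  have hr : ¬ (p.takeUntil w hw).Nil := not_nil_of_ne hwa.symm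
  have hs : ¬ (p.dropUntil w hw).Nil := not_nil_of_ne hwb
  refine ⟨_, _, (p.takeUntil w hw).dropLast, (p.dropUntil w hw).tail,
    adj_penultimate hr, adj_snd hs, ?_⟩
  conv_lhs => rw [← p.take_spec hw]
  rw [support_append, ← support_dropLast_concat hr, ← support_tail_of_not_nil _ hs,
    List.append_assoc, List.singleton_append]

variable [DecidableEq V]

lemma isHamiltonianCycle_cons_concat {v a b : V} {p : G.Walk a b} (hp : p.IsPath)
    (hsupp : ∀ z, z ∈ p.support ↔ z ≠ v) (ha : G.Adj v a) (hb : G.Adj b v) (hab : a ≠ b) :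
    (cons ha (p.concat hb)).IsHamiltonianCycle := by
  have hv : v ∉ p.support := fun h => (hsupp v).1 h rfl
  have hpath : (p.concat hb).IsPath := hp.concat hv hb
  rw [isHamiltonianCycle_iff_isCycle_and_support_count_tail_eq_one, cons_isCycle_iff]
  refine ⟨⟨hpath, fun he => ?_⟩, fun z => ?_⟩
  · rw [edges_concat, List.concat_eq_append, List.mem_append, List.mem_singleton,
      Sym2.eq_iff] at he
    rcases he with he | ⟨-, rfl⟩ | ⟨-, rfl⟩
    · exact hv (p.fst_mem_support_of_mem_edges he)
    · exact ha.ne rfl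
    · exact hab rfl
  · rw [support_cons, List.tail_cons]
    refine List.count_eq_one_of_mem hpath.support_nodup ?_
    rw [support_concat, List.mem_append, List.mem_singleton, hsupp]
    exact ne_or_eq z v

lemma IsHamiltonianCycle.exists_isPath {v : V} {c : G.Walk v v} (hc : c.IsHamiltonianCycle) :
    ∃ a b, ∃ p : G.Walk a b, p.IsPath ∧ (∀ z, z ∈ p.support ↔ z ≠ v) ∧
      G.Adj v a ∧ G.Adj b v ∧ a ≠ b := by
  cases c with
  | nil => exact absurd hc.isCycle not_isCycle_nil
  | @cons _ a _ ha t =>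
    obtain ⟨b, p, hb, rfl⟩ : ∃ b, ∃ (p : G.Walk a b) (hb : G.Adj b v), t = p.concat hb :=
      ⟨_, _, _, (concat_dropLast (adj_penultimate (not_nil_of_isCycle_cons hc.isCycle))).symm⟩
    have hlen := hc.isCycle.three_le_length
    rw [isHamiltonianCycle_iff_isCycle_and_support_count_tail_eq_one, cons_isCycle_iff,
      concat_isPath_iff] at hc
    obtain ⟨⟨⟨hp, hv⟩, -⟩, hcount⟩ := hc
    refine ⟨a, b, p, hp, fun z => ⟨fun hz => ?_, fun hz => ?_⟩, ha, hb, ?_⟩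
    · rintro rfl; exact hv hz
    · have := hcount z
      simp only [support_cons, List.tail_cons, support_concat, List.count_append,
        List.count_singleton, beq_iff_eq, hz.symm, if_false] at this
      exact List.count_pos_iff.1 (by omega)
    · rintro rfl
      rw [length_cons, length_concat, (isPath_iff_nil.1 hp).length_eq_zero] at hlen
      omega

end Walk

end SimpleGraph

open Sum Fin

namespace GPfull

variable {n : ℕ}

abbrev IsEnd (i : Fin n) : Prop := (i : ℕ) = 0 ∨ (i : ℕ) = n - 1

lemma IsEnd.rev {i : Fin n} (hi : IsEnd i) : IsEnd i.rev := by
  unfold IsEnd at *; rw [val_rev]; omega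

lemma IsEnd.eq_rev_of_ne {i j : Fin n} (hi : IsEnd i) (hj : IsEnd j) (hij : i ≠ j) :
    j = i.rev := by
  rw [ne_eq, Fin.ext_iff] at hij
  unfold IsEnd at *
  rw [Fin.ext_iff, val_rev]; omega

def incl : Fin n ⊕ Fin n ↪ Fin (n + 1) ⊕ Fin (n + 1) := castSuccEmb.sumMap castSuccEmb

@[simp] lemma incl_inl (i : Fin n) : incl (inl i) = inl i.castSucc := rfl

@[simp] lemma incl_inr (i : Fin n) : incl (inr i) = inr i.castSucc := rfl

@[simp] lemma incl_ne_inl_last (z : Fin n ⊕ Fin n) : incl z ≠ inl (last n) := by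
  rcases z with i | i <;> simp [Fin.castSucc_ne_last]

@[simp] lemma incl_ne_inr_last (z : Fin n ⊕ Fin n) : incl z ≠ inr (last n) := by
  rcases z with i | i <;> simp [Fin.castSucc_ne_last]

lemma eq_inl_last_or_eq_inr_last_or_mem_range (z : Fin (n + 1) ⊕ Fin (n + 1)) :
    z = inl (last n) ∨ z = inr (last n) ∨ z ∈ Set.range incl := by
  rcases z with m | m <;> induction m using lastCases <;> simp

variable {π : Equiv.Perm (Fin (n + 1))} {σ : Equiv.Perm (Fin n)}

section Embedding

variable (hσ : ∀ i, π i.castSucc = (σ i).castSucc)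

def embedding : GP' n σ ↪g GPfull (n + 1) π where
  toEmbedding := incl
  map_rel_iff' {a b} := by
    rcases a with i | i <;> rcases b with j | j <;>
      simp only [GPfull, GP', fromRel_adj, incl_inl, incl_inr, hσ, ne_eq, inl.injEq, inr.injEq,
        reduceCtorEq, castSucc_inj, or_false, false_or, not_false_eq_true, true_and]
    all_goals simp only [Fin.ext_iff, val_castSucc]; omega

include hσ

lemma exists_isPath_lift {a b : Fin n ⊕ Fin n} (R : (GPfull (n + 1) π).Walk (incl a) (incl b))
    (hR : R.IsPath) (hv : inl (last n) ∉ R.support) (hw : inr (last n) ∉ R.support) :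
    ∃ q : (GP' n σ).Walk a b, q.IsPath ∧ ∀ z, z ∈ q.support ↔ incl z ∈ R.support := by
  obtain ⟨q, hq⟩ := Walk.exists_map_eq_of_forall_mem_range (embedding hσ) R fun z hz => by
    rcases eq_inl_last_or_eq_inr_last_or_mem_range z with rfl | rfl | hz'
    exacts [absurd hz hv, absurd hz hw, hz']
  have hsupp : q.support.map incl = R.support :=
    (Walk.support_map _ _).symm.trans (congrArg Walk.support hq)
  refine ⟨q, ?_, fun z => ?_⟩
  · rw [Walk.isPath_def, ← List.nodup_map_iff incl.injective, hsupp]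
    exact hR.support_nodup
  · rw [← hsupp, List.mem_map_of_injective incl.injective]

lemma exists_isPath_map {a b : Fin n ⊕ Fin n} {p : (GP' n σ).Walk a b} (hp : p.IsPath) :
    ∃ P : (GPfull (n + 1) π).Walk (incl a) (incl b),
      P.IsPath ∧ P.support = p.support.map incl :=
  ⟨p.map (embedding hσ).toHom, (Walk.isPath_map_iff_of_injective (embedding hσ).injective).2 hp,
    Walk.support_map _ _⟩

end Embedding

section Adjacency

variable (hlast : π (last n) = last n)
include hlast

lemma adj_inl_last_iff (z : Fin (n + 1) ⊕ Fin (n + 1)) :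
    (GPfull (n + 1) π).Adj (inl (last n)) z ↔
      z = inr (last n) ∨ ∃ i, IsEnd i ∧ incl (inl i) = z := by
  rcases z with m | m <;> induction m using lastCases <;>
    simp only [GPfull, fromRel_adj, incl_inl, hlast, ne_eq, inl.injEq, inr.injEq, reduceCtorEq,
      castSucc_inj, or_false, false_or, not_false_eq_true, true_and, and_false, exists_false,
      exists_eq_right, castSucc_ne_last, not_true_eq_false, false_and]
  all_goals simp only [IsEnd, Fin.ext_iff, val_last, val_castSucc]; omega

lemma adj_inr_last_iff (z : Fin (n + 1) ⊕ Fin (n + 1)) :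
    (GPfull (n + 1) π).Adj (inr (last n)) z ↔
      z = inl (last n) ∨ ∃ j, IsEnd j ∧ incl (inr j) = z := by
  have hπ : ∀ m, last n = π m ↔ m = last n := fun m => by
    simpa [hlast, eq_comm] using π.apply_eq_iff_eq (x := m) (y := last n)
  rcases z with m | m <;> induction m using lastCases <;>
    simp only [GPfull, fromRel_adj, incl_inr, hπ, ne_eq, inl.injEq, inr.injEq, reduceCtorEq,
      castSucc_inj, or_false, false_or, not_false_eq_true, true_and, and_false, exists_false,
      exists_eq_right, castSucc_ne_last, not_true_eq_false, false_and]
  all_goals simp only [IsEnd, Fin.ext_iff, val_last, val_castSucc]; omega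

lemma adj_inl_last_incl_inl {i : Fin n} (hi : IsEnd i) :
    (GPfull (n + 1) π).Adj (inl (last n)) (incl (inl i)) :=
  (adj_inl_last_iff hlast _).2 (Or.inr ⟨i, hi, rfl⟩)

lemma adj_inr_last_incl_inr {j : Fin n} (hj : IsEnd j) :
    (GPfull (n + 1) π).Adj (inr (last n)) (incl (inr j)) :=
  (adj_inr_last_iff hlast _).2 (Or.inr ⟨j, hj, rfl⟩)

lemma adj_inr_last_inl_last : (GPfull (n + 1) π).Adj (inr (last n)) (inl (last n)) :=
  (adj_inr_last_iff hlast _).2 (Or.inl rfl)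

end Adjacency

variable (hσ : ∀ i, π i.castSucc = (σ i).castSucc) (hlast : π (last n) = last n)
include hσ hlast

lemma isGood_of_isPath_to_inr_last {i : Fin n} (hi : IsEnd i)
    (P : (GPfull (n + 1) π).Walk (incl (inl i)) (inr (last n))) (hP : P.IsPath)
    (hsupp : ∀ z, z ∈ P.support ↔ z ≠ inl (last n)) : IsGood σ := by
  have hPn : ¬ P.Nil := Walk.not_nil_of_ne (incl_ne_inr_last _)
  obtain ⟨d, R, hd, hPR⟩ : ∃ d, ∃ R : (GPfull (n + 1) π).Walk (incl (inl i)) d,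
      (GPfull (n + 1) π).Adj d (inr (last n)) ∧ P.support = R.support ++ [inr (last n)] :=
    ⟨_, _, Walk.adj_penultimate hPn, (Walk.support_dropLast_concat hPn).symm⟩
  have hnd := hP.support_nodup
  rw [hPR, List.nodup_append] at hnd
  have hwR : inr (last n) ∉ R.support := fun h => hnd.2.2 _ h _ (List.mem_singleton_self _) rfl
  have hvR : inl (last n) ∉ R.support := fun h =>
    (hsupp _).1 (hPR ▸ List.mem_append_left _ h) rfl
  obtain ⟨j, hj, rfl⟩ := ((adj_inr_last_iff hlast d).1 hd.symm).resolve_left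
    fun h => hvR (h ▸ R.end_mem_support)
  obtain ⟨q, hq, hqsupp⟩ := exists_isPath_lift hσ R (Walk.IsPath.mk' hnd.1) hvR hwR
  refine Or.inl ⟨i, j, hi, hj, q, hq, fun z => (hqsupp z).2 ?_⟩
  have hz := (hsupp (incl z)).2 (incl_ne_inl_last z)
  rw [hPR] at hz
  simpa using hz

lemma isGood_of_isPath_to_inl_rev {i : Fin n} (hi : IsEnd i)
    (P : (GPfull (n + 1) π).Walk (incl (inl i)) (incl (inl i.rev))) (hP : P.IsPath)
    (hsupp : ∀ z, z ∈ P.support ↔ z ≠ inl (last n)) : IsGood σ := by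
  obtain ⟨d₁, d₂, R, S, hd₁, hd₂, hPRS⟩ := P.exists_support_eq_append_cons
    ((hsupp _).2 (by simp)) (incl_ne_inr_last _).symm (incl_ne_inr_last _).symm
  have hnd := hP.support_nodup
  rw [hPRS, List.nodup_middle, List.nodup_cons, List.nodup_append] at hnd
  obtain ⟨hwRS, hR, hS, hRS⟩ := hnd
  have hvRS : inl (last n) ∉ R.support ++ S.support := fun h =>
    (hsupp _).1 (by rw [hPRS]; simp only [List.mem_append, List.mem_cons] at h ⊢; tauto) rfl
  simp only [List.mem_append, not_or] at hwRS hvRS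
  obtain ⟨hwR, hwS⟩ := hwRS
  obtain ⟨hvR, hvS⟩ := hvRS
  obtain ⟨j, hj, rfl⟩ := ((adj_inr_last_iff hlast d₁).1 hd₁.symm).resolve_left
    fun h => hvR (h ▸ R.end_mem_support)
  obtain ⟨j', hj', rfl⟩ := ((adj_inr_last_iff hlast d₂).1 hd₂).resolve_left
    fun h => hvS (h ▸ S.start_mem_support)
  obtain rfl := hj.eq_rev_of_ne hj' fun h =>
    hRS _ R.end_mem_support _ S.start_mem_support (h ▸ rfl)
  obtain ⟨p, hp, hpsupp⟩ := exists_isPath_lift hσ R (Walk.IsPath.mk' hR) hvR hwR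
  obtain ⟨q, hq, hqsupp⟩ := exists_isPath_lift hσ S.reverse
    (Walk.IsPath.mk' (by rwa [Walk.support_reverse, List.nodup_reverse]))
    (by rwa [Walk.support_reverse, List.mem_reverse])
    (by rwa [Walk.support_reverse, List.mem_reverse])
  simp only [Walk.support_reverse, List.mem_reverse] at hqsupp
  refine Or.inr ⟨i, j, hi, hj, p, q, hp, hq, fun z => ?_, fun z ⟨hzp, hzq⟩ => ?_⟩
  · rw [hpsupp, hqsupp]
    have hz := (hsupp (incl z)).2 (incl_ne_inl_last z)
    rw [hPRS] at hz
    simpa using hz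
  · exact hRS _ ((hpsupp z).1 hzp) _ ((hqsupp z).1 hzq) rfl

lemma isGood_of_isPath {a b : Fin (n + 1) ⊕ Fin (n + 1)} (P : (GPfull (n + 1) π).Walk a b)
    (hP : P.IsPath) (hsupp : ∀ z, z ∈ P.support ↔ z ≠ inl (last n))
    (ha : (GPfull (n + 1) π).Adj (inl (last n)) a) (hb : (GPfull (n + 1) π).Adj b (inl (last n)))
    (hab : a ≠ b) : IsGood σ := by
  rcases (adj_inl_last_iff hlast a).1 ha with rfl | ⟨i, hi, rfl⟩ <;>
    rcases (adj_inl_last_iff hlast b).1 hb.symm with rfl | ⟨i', hi', rfl⟩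
  · exact absurd rfl hab
  · refine isGood_of_isPath_to_inr_last hσ hlast hi' P.reverse hP.reverse fun z => ?_
    rw [Walk.support_reverse, List.mem_reverse, hsupp]
  · exact isGood_of_isPath_to_inr_last hσ hlast hi P hP hsupp
  · obtain rfl := hi.eq_rev_of_ne hi' fun h => hab (h ▸ rfl)
    exact isGood_of_isPath_to_inl_rev hσ hlast hi P hP hsupp

lemma isHamiltonian_of_isPath_inl_inr {i j : Fin n} (hi : IsEnd i) (hj : IsEnd j)
    {p : (GP' n σ).Walk (inl i) (inr j)} (hp : p.IsPath) (hcov : ∀ z, z ∈ p.support) :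
    (GPfull (n + 1) π).IsHamiltonian := by
  obtain ⟨P, hP, hPsupp⟩ := exists_isPath_map hσ hp
  have hw : inr (last n) ∉ P.support := by rw [hPsupp]; simp
  refine fun _ => ⟨_, _, Walk.isHamiltonianCycle_cons_concat
    (hP.concat hw (adj_inr_last_incl_inr hlast hj).symm) (fun z => ?_)
    (adj_inl_last_incl_inl hlast hi) (adj_inr_last_inl_last hlast) (incl_ne_inr_last _)⟩
  rw [Walk.support_concat, hPsupp]
  rcases eq_inl_last_or_eq_inr_last_or_mem_range z with rfl | rfl | ⟨z, rfl⟩ <;> simp [hcov]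

lemma isHamiltonian_of_isPath_pair {i j : Fin n} (hi : IsEnd i) (hj : IsEnd j)
    {p : (GP' n σ).Walk (inl i) (inr j)} {q : (GP' n σ).Walk (inl i.rev) (inr j.rev)}
    (hp : p.IsPath) (hq : q.IsPath) (hcov : ∀ z, z ∈ p.support ∨ z ∈ q.support)
    (hdisj : ∀ z, ¬(z ∈ p.support ∧ z ∈ q.support)) :
    (GPfull (n + 1) π).IsHamiltonian := by
  obtain ⟨P, -, hPsupp⟩ := exists_isPath_map hσ hp
  obtain ⟨Q, -, hQsupp⟩ := exists_isPath_map hσ hq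
  have hrev : i ≠ i.rev := fun h => hdisj (inl i.rev) ⟨by rw [← h]; exact p.start_mem_support,
    q.start_mem_support⟩
  let C := P.append (.cons (adj_inr_last_incl_inr hlast hj).symm
    (.cons (adj_inr_last_incl_inr hlast hj.rev) Q.reverse))
  have hC : C.support = p.support.map incl ++ inr (last n) :: (q.support.map incl).reverse := by
    rw [Walk.support_append, Walk.support_cons, Walk.support_cons, Walk.support_reverse, hPsupp,
      hQsupp]
    simp
  have hCpath : C.IsPath := by
    refine .mk' ?_
    rw [hC, List.nodup_middle, List.nodup_cons, List.nodup_append]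
    refine ⟨by simp, hp.support_nodup.map incl.injective,
      List.nodup_reverse.2 (hq.support_nodup.map incl.injective), ?_⟩
    simp only [List.mem_reverse, List.mem_map]
    rintro _ ⟨z, hzp, rfl⟩ _ ⟨z', hzq, rfl⟩ h
    exact hdisj z ⟨hzp, incl.injective h ▸ hzq⟩
  refine fun _ => ⟨_, _, Walk.isHamiltonianCycle_cons_concat hCpath (fun z => ?_)
    (adj_inl_last_incl_inl hlast hi) (adj_inl_last_incl_inl hlast hi.rev).symm
    (fun h => hrev (by simpa using h))⟩
  rw [hC]
  rcases eq_inl_last_or_eq_inr_last_or_mem_range z with rfl | rfl | ⟨z, rfl⟩ <;> simp [hcov]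

theorem isHamiltonian_iff_isGood : (GPfull (n + 1) π).IsHamiltonian ↔ IsGood σ := by
  refine ⟨fun hG => ?_, ?_⟩
  · have : Nontrivial (Fin (n + 1) ⊕ Fin (n + 1)) := ⟨inl 0, inr 0, inl_ne_inr⟩
    obtain ⟨c, hc⟩ := hG.exists_isHamiltonianCycle (inl (last n))
    obtain ⟨a, b, P, hP, hsupp, ha, hb, hab⟩ := hc.exists_isPath
    exact isGood_of_isPath hσ hlast P hP hsupp ha hb hab
  · rintro (⟨i, j, hi, hj, p, hp, hcov⟩ | ⟨i, j, hi, hj, p, q, hp, hq, hcov, hdisj⟩)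
    · exact isHamiltonian_of_isPath_inl_inr hσ hlast hi hj hp hcov
    · exact isHamiltonian_of_isPath_pair hσ hlast hi hj hp hq hcov hdisj

end GPfull

/-- Klee's Proposition 1: if `π` is a permutation of `Z_k` with `π(k-1) = k-1` and `k ≥ 4`,
then `G(π)` is non-hamiltonian iff the restriction `π̄` of `π` to `Z_{k-1}` is bad. -/
theorem statement_16 (k : ℕ) (hk : 4 ≤ k) (π : Equiv.Perm (Fin k))
    (hlast : π ⟨k - 1, by omega⟩ = ⟨k - 1, by omega⟩)
    (σ : Equiv.Perm (Fin (k - 1)))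
    (hσ : ∀ i : Fin (k - 1),
      ((π ⟨(i : ℕ), i.isLt.trans_le (Nat.sub_le k 1)⟩ : Fin k) : ℕ) = ((σ i : Fin (k - 1)) : ℕ)) :
    ¬ (GPfull k π).IsHamiltonian ↔ IsBad σ := by
  obtain ⟨n, rfl⟩ : ∃ n, k = n + 1 := ⟨k - 1, by omega⟩
  exact not_congr (GPfull.isHamiltonian_iff_isGood (fun i => Fin.ext (hσ i)) hlast)
end
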